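/- arXiv:math/0405297 — 3 statements merged into one kernel-verified Lean document; each statement's English description precedes it below -/
import Mathlib

section
/- Let ς be a real random variable with a density that is symmetric about 0, continuous, and nonincreasing on [0,∞). Then for every c ∈ ℝ and a > 0, P(|ς + c| ≤ a) ≤ P(|ς| ≤ a). -/
open MeasureTheory Set Metric
open scoped ENNReal

/-! The point reflection `x ↦ c - x` preserves Lebesgue (indeed any Haar) measure and swaps the
balls `closedBall 0 a` and `closedBall c a`. It therefore maps the part of `closedBall 0 a` lying
outside `closedBall c a` onto the part of `closedBall c a` lying outside `closedBall 0 a`, and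
every point of the former is closer to `0` than its image. A density that is nonincreasing in
`‖x‖` thus gives `closedBall c a` at most the mass of `closedBall 0 a`. -/

theorem setLIntegral_le_of_measurePreserving_swap {α : Type*} [MeasurableSpace α]
    {μ : Measure α} {T : α → α} (hT : MeasurePreserving T μ μ) (hTe : MeasurableEmbedding T)
    {A B : Set α} (hB : MeasurableSet B) (hTA : T ⁻¹' A = B) (hTB : T ⁻¹' B = A)
    {f : α → ℝ≥0∞} (hf : ∀ x ∈ B \ A, f (T x) ≤ f x) :
    ∫⁻ x in A, f x ∂μ ≤ ∫⁻ x in B, f x ∂μ := by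
  have hA : MeasurableSet A := hTB ▸ hT.measurable hB
  have hswap : T ⁻¹' (A \ B) = B \ A := by rw [preimage_sdiff, hTA, hTB]
  calc ∫⁻ x in A, f x ∂μ = ∫⁻ x in B ∩ A, f x ∂μ + ∫⁻ x in B \ A, f (T x) ∂μ := by
        rw [← hswap, hT.setLIntegral_comp_preimage_emb hTe, inter_comm,
          lintegral_inter_add_sdiff _ _ hB]
    _ ≤ ∫⁻ x in B ∩ A, f x ∂μ + ∫⁻ x in B \ A, f x ∂μ := by
        gcongr ∫⁻ x in B ∩ A, f x ∂μ + ?_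
        exact setLIntegral_mono' (hB.diff hA) hf
    _ = ∫⁻ x in B, f x ∂μ := lintegral_inter_add_sdiff _ _ hA

theorem setLIntegral_closedBall_le_closedBall_zero {E : Type*} [NormedAddCommGroup E]
    [MeasurableSpace E] [BorelSpace E] {μ : Measure E} [μ.IsAddLeftInvariant]
    [μ.IsNegInvariant] {f : E → ℝ≥0∞} (hf : ∀ x y, ‖x‖ ≤ ‖y‖ → f y ≤ f x) (c : E) (a : ℝ) :
    ∫⁻ x in closedBall c a, f x ∂μ ≤ ∫⁻ x in closedBall 0 a, f x ∂μ := by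
  refine setLIntegral_le_of_measurePreserving_swap (μ.measurePreserving_sub_left c)
    (measurableEmbedding_subLeft c) isClosed_closedBall.measurableSet ?_ ?_ ?_
  · ext x; simp [dist_eq_norm]
  · ext x; simp [dist_eq_norm, norm_sub_rev]
  · rintro x ⟨hx, hxc⟩
    simp only [mem_closedBall, dist_eq_norm, sub_zero, not_le] at hx hxc
    exact hf _ _ (by rw [norm_sub_rev]; linarith)

theorem Function.Even.apply_abs {α β : Type*} [AddCommGroup α] [LinearOrder α]
    {p : α → β} (hp : p.Even) (x : α) : p |x| = p x := by
  rcases abs_choice x with h | h <;> rw [h]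
  exact hp x

theorem Function.Even.apply_le_apply_of_abs_le_abs {α β : Type*} [AddCommGroup α]
    [LinearOrder α] [IsOrderedAddMonoid α] [Preorder β] {p : α → β} (hp : p.Even)
    (hmono : AntitoneOn p (Ici 0)) {x y : α} (h : |x| ≤ |y|) : p y ≤ p x := by
  rw [← hp.apply_abs x, ← hp.apply_abs y]
  exact hmono (abs_nonneg x) (abs_nonneg y) h

theorem anderson_inequality_dim_one_general
    {Ω : Type*} [MeasurableSpace Ω] (ℙ : Measure Ω)
    (ς : Ω → ℝ) (hς : Measurable ς) (p : ℝ → ℝ)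
    (hdens : Measure.map ς ℙ = volume.withDensity (fun x => ENNReal.ofReal (p x)))
    (hsymm : ∀ x, p (-x) = p x)
    (hmono : AntitoneOn p (Ici 0)) :
    ∀ (c : ℝ) (a : ℝ), 0 < a →
      ℙ {ω | |ς ω + c| ≤ a} ≤ ℙ {ω | |ς ω| ≤ a} := by
  intro c a _
  have hprob (z : ℝ) :
      ℙ {ω | |ς ω + z| ≤ a} = ∫⁻ x in closedBall (-z) a, ENNReal.ofReal (p x) := by
    have hball : {ω | |ς ω + z| ≤ a} = ς ⁻¹' closedBall (-z) a := by
      ext ω; simp [Real.dist_eq]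
    rw [hball, ← Measure.map_apply hς isClosed_closedBall.measurableSet, hdens,
      withDensity_apply _ isClosed_closedBall.measurableSet]
  have hradial (x y : ℝ) (h : ‖x‖ ≤ ‖y‖) : ENNReal.ofReal (p y) ≤ ENNReal.ofReal (p x) :=
    ENNReal.ofReal_le_ofReal (Function.Even.apply_le_apply_of_abs_le_abs hsymm hmono h)
  have hcentered := hprob 0
  simp only [add_zero, neg_zero] at hcentered
  rw [hprob, hcentered]
  exact setLIntegral_closedBall_le_closedBall_zero hradial (-c) a

/-- **Anderson's inequality** in dimension one: if `ς` is a real random variable with a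
density that is symmetric about `0`, continuous, and nonincreasing on `[0, ∞)`, then for
every `c ∈ ℝ` and `a > 0`, `P(|ς + c| ≤ a) ≤ P(|ς| ≤ a)`. -/
theorem anderson_inequality_dim_one
    {Ω : Type*} [MeasurableSpace Ω] (ℙ : Measure Ω) [IsProbabilityMeasure ℙ]
    (ς : Ω → ℝ) (hς : Measurable ς) (p : ℝ → ℝ)
    (hdens : Measure.map ς ℙ = volume.withDensity (fun x => ENNReal.ofReal (p x)))
    (hnonneg : ∀ x, 0 ≤ p x)
    (hsymm : ∀ x, p (-x) = p x)
    (hcont : Continuous p)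
    (hmono : AntitoneOn p (Ici 0)) :
    ∀ (c : ℝ) (a : ℝ), 0 < a →
      ℙ {ω | |ς ω + c| ≤ a} ≤ ℙ {ω | |ς ω| ≤ a} :=
  anderson_inequality_dim_one_general ℙ ς hς p hdens hsymm hmono
end

section
/- If X and Y are independent real random variables, each having a density that is symmetric about 0 and nonincreasing on [0,∞), then X + Y has a density that is symmetric about 0 and nonincreasing on [0,∞). -/
open MeasureTheory Set ProbabilityTheory
open scoped ENNReal

/-!
Write `r = p ⋆ q`. Evenness of `r` is the substitution `y ↦ -y`. For `0 ≤ a ≤ b`, pair each `y`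
with its mirror image `a + b - y` about the midpoint of `[a, b]`: by evenness of `q` the two
contributions to `r b` and to `r a` differ by `(p (a + b - y) - p y) * (q (b - y) - q (a - y))`,
whose factors have the same sign on either side of the midpoint, so `r b ≤ r a`. Finally
`r ≤ p 0 * ∫ q = p 0`, so the density is finite and can be taken real-valued.
-/

def IsSymmUnimodal {α : Type*} [Preorder α] (f : ℝ → α) : Prop :=
  f.Even ∧ AntitoneOn f (Ici 0)

namespace IsSymmUnimodal

variable {α β : Type*} [Preorder α] [Preorder β] {f : ℝ → α}

theorem apply_abs (hf : IsSymmUnimodal f) (x : ℝ) : f |x| = f x := by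
  rcases abs_choice x with h | h <;> rw [h]
  exact hf.1 x

theorem le_of_abs_le (hf : IsSymmUnimodal f) {x y : ℝ} (h : |x| ≤ |y|) : f y ≤ f x := by
  rw [← hf.apply_abs x, ← hf.apply_abs y]
  exact hf.2 (abs_nonneg x) (abs_nonneg y) h

theorem comp_monotoneOn (hf : IsSymmUnimodal f) {g : α → β} {s : Set α}
    (hg : MonotoneOn g s) (hfs : ∀ x, f x ∈ s) : IsSymmUnimodal (g ∘ f) :=
  ⟨fun x => congrArg g (hf.1 x), fun _ hx _ hy hxy => hg (hfs _) (hfs _) (hf.2 hx hy hxy)⟩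

end IsSymmUnimodal

theorem IsSymmUnimodal.measurable {α : Type*} [LinearOrder α] [TopologicalSpace α]
    [OrderTopology α] [SecondCountableTopology α] [MeasurableSpace α] [BorelSpace α] {f : ℝ → α}
    (hf : IsSymmUnimodal f) : Measurable f := by
  have hanti : Antitone fun t => f (max t 0) := fun s t hst =>
    hf.2 (le_max_right s 0) (le_max_right t 0) (max_le_max_right 0 hst)
  have hfac : f = (fun t => f (max t 0)) ∘ abs := by
    funext x
    simp [hf.apply_abs]
  rw [hfac]
  exact hanti.measurable.comp measurable_abs

/-- The rearrangement inequality; the general `mul_add_mul_le_mul_add_mul` needs cancellative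
addition, which `ℝ≥0∞` lacks. -/
theorem ENNReal.mul_add_mul_le_mul_add_mul {a b c d : ℝ≥0∞} (hab : a ≤ b) (hcd : c ≤ d) :
    a * d + b * c ≤ a * c + b * d := by
  obtain ⟨e, rfl⟩ := exists_add_of_le hab
  obtain ⟨f, rfl⟩ := exists_add_of_le hcd
  calc a * (c + f) + (a + e) * c = a * c + (a * c + a * f + e * c) := by ring
    _ ≤ a * c + (a * c + a * f + e * c + e * f) := add_le_add le_rfl le_self_add
    _ = a * c + (a + e) * (c + f) := by ring

theorem Function.Even.lconvolution {E : Type*} [AddCommGroup E] [MeasurableSpace E]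
    [MeasurableNeg E] {μ : Measure E} [μ.IsNegInvariant] {F G : E → ℝ≥0∞}
    (hF : F.Even) (hG : G.Even) : (F ⋆ₗ[μ] G).Even := by
  intro x
  simp only [lconvolution_def]
  rw [← lintegral_neg_eq_self]
  refine lintegral_congr fun y => ?_
  rw [hF, neg_neg, ← hG]
  congr 2
  abel

namespace IsSymmUnimodal

variable {F G : ℝ → ℝ≥0∞}

theorem mul_add_mul_reflect_le (hF : IsSymmUnimodal F) (hG : IsSymmUnimodal G) {a b : ℝ}
    (ha : 0 ≤ a) (hab : a ≤ b) (y : ℝ) :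
    F y * G (b - y) + F (a + b - y) * G (b - (a + b - y))
      ≤ F y * G (a - y) + F (a + b - y) * G (a - (a + b - y)) := by
  have hGb : G (b - (a + b - y)) = G (a - y) := by
    rw [← hG.1 (a - y)]
    ring_nf
  have hGa : G (a - (a + b - y)) = G (b - y) := by
    rw [← hG.1 (b - y)]
    ring_nf
  rw [hGb, hGa]
  rcases le_total ((a + b) / 2) y with hy | hy
  · refine ENNReal.mul_add_mul_le_mul_add_mul (hF.le_of_abs_le ?_) (hG.le_of_abs_le ?_)
    · exact abs_le_abs (by linarith) (by linarith)
    · rw [abs_sub_comm a]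
      exact abs_le_abs (by linarith) (by linarith)
  · rw [add_comm, add_comm (F y * _)]
    refine ENNReal.mul_add_mul_le_mul_add_mul (hF.le_of_abs_le ?_) (hG.le_of_abs_le ?_)
    · exact abs_le_abs (by linarith) (by linarith)
    · exact abs_le_abs (by linarith) (by linarith)

theorem antitoneOn_lconvolution (hF : IsSymmUnimodal F) (hG : IsSymmUnimodal G) :
    AntitoneOn (F ⋆ₗ G) (Ici 0) := by
  intro a ha b _ hab
  have hpair : ∀ x, 2 * (F ⋆ₗ G) x
      = ∫⁻ y, F y * G (x - y) + F (a + b - y) * G (x - (a + b - y)) := by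
    intro x
    have hreflect := lintegral_sub_left_eq_self (μ := volume) (fun y => F y * G (x - y)) (a + b)
    have hmeas : Measurable fun y => F y * G (x - y) :=
      hF.measurable.mul (hG.measurable.comp (measurable_const.sub measurable_id))
    simp only [lintegral_add_left hmeas, hreflect, two_mul, lconvolution_def, neg_add_eq_sub]
  rw [← ENNReal.mul_le_mul_iff_right two_ne_zero ENNReal.ofNat_ne_top, hpair, hpair]
  exact lintegral_mono (hF.mul_add_mul_reflect_le hG ha hab)

theorem lconvolution (hF : IsSymmUnimodal F) (hG : IsSymmUnimodal G) :
    IsSymmUnimodal (F ⋆ₗ G) :=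
  ⟨hF.1.lconvolution hG.1, hF.antitoneOn_lconvolution hG⟩

end IsSymmUnimodal

theorem lconvolution_le_mul_lintegral {E : Type*} [AddCommGroup E] [MeasurableSpace E]
    [MeasurableAdd₂ E] [MeasurableNeg E] {μ : Measure E} [μ.IsAddLeftInvariant] [μ.IsNegInvariant]
    {F G : E → ℝ≥0∞} {c : ℝ≥0∞} (hc : c ≠ ∞) (hF : ∀ y, F y ≤ c) (x : E) :
    (F ⋆ₗ[μ] G) x ≤ c * ∫⁻ y, G y ∂μ :=
  calc (F ⋆ₗ[μ] G) x = ∫⁻ y, G y * F (-y + x) ∂μ := by rw [lconvolution_comm, lconvolution_def]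
    _ ≤ ∫⁻ y, G y * c ∂μ := lintegral_mono fun y => by gcongr; exact hF _
    _ = c * ∫⁻ y, G y ∂μ := by rw [lintegral_mul_const' c G hc, mul_comm]

theorem sum_indep_symm_unimodal_density_general
    {Ω : Type*} [MeasurableSpace Ω] (P : Measure Ω) [IsProbabilityMeasure P]
    (X Y : Ω → ℝ) (hX : Measurable X) (hY : Measurable Y)
    (hindep : IndepFun X Y P)
    (p q : ℝ → ℝ)
    (hp : Measure.map X P = volume.withDensity (fun x => ENNReal.ofReal (p x)))
    (hq : Measure.map Y P = volume.withDensity (fun x => ENNReal.ofReal (q x)))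
    (hpsymm : ∀ x, p (-x) = p x) (hqsymm : ∀ x, q (-x) = q x)
    (hpmono : AntitoneOn p (Ici 0)) (hqmono : AntitoneOn q (Ici 0)) :
    ∃ r : ℝ → ℝ, (∀ x, 0 ≤ r x) ∧
      Measure.map (fun ω => X ω + Y ω) P
        = volume.withDensity (fun x => ENNReal.ofReal (r x)) ∧
      (∀ x, r (-x) = r x) ∧ AntitoneOn r (Ici 0) := by
  set F : ℝ → ℝ≥0∞ := fun x => ENNReal.ofReal (p x)
  set G : ℝ → ℝ≥0∞ := fun x => ENNReal.ofReal (q x)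
  have hF : IsSymmUnimodal F := IsSymmUnimodal.comp_monotoneOn (f := p) ⟨hpsymm, hpmono⟩
    (ENNReal.ofReal_mono.monotoneOn univ) fun _ => mem_univ _
  have hG : IsSymmUnimodal G := IsSymmUnimodal.comp_monotoneOn (f := q) ⟨hqsymm, hqmono⟩
    (ENNReal.ofReal_mono.monotoneOn univ) fun _ => mem_univ _
  have hlaw : P.map (fun ω => X ω + Y ω) = volume.withDensity (F ⋆ₗ G) := by
    rw [show (fun ω => X ω + Y ω) = X + Y from rfl, hindep.map_add_eq_map_conv_map hX hY, hp, hq,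
      conv_withDensity_eq_lconvolution hF.measurable hG.measurable]
  have hG_mass : ∫⁻ y, G y = 1 := by
    rw [← setLIntegral_univ, ← withDensity_apply _ MeasurableSet.univ, ← hq,
      Measure.map_apply hY MeasurableSet.univ, preimage_univ, measure_univ]
  have hfinite (x : ℝ) : (F ⋆ₗ G) x ≠ ∞ := by
    refine ne_top_of_le_ne_top ?_ (lconvolution_le_mul_lintegral ENNReal.ofReal_ne_top
      (fun y => hF.le_of_abs_le (x := 0) (by simp)) x)
    rw [hG_mass, mul_one]
    exact ENNReal.ofReal_ne_top
  obtain ⟨hsymm, hmono⟩ := (hF.lconvolution hG).comp_monotoneOn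
    (fun _ _ _ hb hab => ENNReal.toReal_mono hb hab) hfinite
  refine ⟨fun x => ((F ⋆ₗ G) x).toReal, fun _ => ENNReal.toReal_nonneg, ?_, hsymm, hmono⟩
  rw [hlaw]
  congr 1
  funext x
  exact (ENNReal.ofReal_toReal (hfinite x)).symm

/-- If `X` and `Y` are independent real random variables, each having a density that is
symmetric about `0` and nonincreasing on `[0, ∞)`, then `X + Y` has a density that is
symmetric about `0` and nonincreasing on `[0, ∞)`. -/
theorem sum_indep_symm_unimodal_density
    {Ω : Type*} [MeasurableSpace Ω] (P : Measure Ω) [IsProbabilityMeasure P]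
    (X Y : Ω → ℝ) (hX : Measurable X) (hY : Measurable Y)
    (hindep : IndepFun X Y P)
    (p q : ℝ → ℝ)
    (hp : Measure.map X P = volume.withDensity (fun x => ENNReal.ofReal (p x)))
    (hq : Measure.map Y P = volume.withDensity (fun x => ENNReal.ofReal (q x)))
    (hp0 : ∀ x, 0 ≤ p x) (hq0 : ∀ x, 0 ≤ q x)
    (hpsymm : ∀ x, p (-x) = p x) (hqsymm : ∀ x, q (-x) = q x)
    (hpmono : AntitoneOn p (Ici 0)) (hqmono : AntitoneOn q (Ici 0)) :
    ∃ r : ℝ → ℝ, (∀ x, 0 ≤ r x) ∧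
      Measure.map (fun ω => X ω + Y ω) P
        = volume.withDensity (fun x => ENNReal.ofReal (r x)) ∧
      (∀ x, r (-x) = r x) ∧ AntitoneOn r (Ici 0) :=
  sum_indep_symm_unimodal_density_general P X Y hX hY hindep p q hp hq hpsymm hqsymm hpmono hqmono
end

section
/- Let A_1, A_2, … be i.i.d. random q×q matrices with E(A_1 ⊗ A_1) having all eigenvalues of modulus less than one, where ⊗ is the Kronecker product. Then there exist constants c > 0 and γ > 0 such that E‖A_1⋯A_n‖² ≤ c e^{−γn} for all n. -/
open MeasureTheory Set Filter ProbabilityTheory Kronecker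

noncomputable instance {m n α : Type*} [MeasurableSpace α] :
    MeasurableSpace (Matrix m n α) := MeasurableSpace.pi

/-- The Frobenius norm of a real matrix, `‖A‖² = tr (A Aᵀ)`. -/
noncomputable def frobNorm {q : ℕ} (A : Matrix (Fin q) (Fin q) ℝ) : ℝ :=
  Real.sqrt (∑ i, ∑ j, (A i j) ^ 2)

/-- The ordered product `A_1 ⋯ A_n` of the first `n` matrices of the sequence. -/
noncomputable def matProd {Ω : Type*} {q : ℕ} (A : ℕ → Ω → Matrix (Fin q) (Fin q) ℝ)
    (n : ℕ) (ω : Ω) : Matrix (Fin q) (Fin q) ℝ :=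
  ((List.range n).map (fun i => A i ω)).prod

/-! Since `‖X‖² = ∑ᵢⱼ ((X ⊗ X) (i, i) (j, j))` and
`(A₁⋯Aₙ) ⊗ (A₁⋯Aₙ) = (A₁ ⊗ A₁)⋯(Aₙ ⊗ Aₙ)` is a product of independent factors with common
mean `M = E(A₁ ⊗ A₁)`, the second moment `E‖A₁⋯Aₙ‖²` is a fixed linear functional of `Mⁿ`.
By Gelfand's formula, `‖Mⁿ‖ ≤ C rⁿ` for any `r` strictly between the spectral radius of `M`
and `1`. -/

open scoped NNReal ENNReal

theorem spectrum.exists_norm_pow_le_mul_pow_of_spectralRadius_lt {A : Type*} [NormedRing A]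
    [NormedAlgebra ℂ A] [CompleteSpace A] {a : A} {r : ℝ≥0} (h : spectralRadius ℂ a < r) :
    ∃ C, ∀ n : ℕ, ‖a ^ n‖ ≤ C * (r : ℝ) ^ n := by
  have hr : (0 : ℝ) < r := by exact_mod_cast pos_of_gt h
  have hev : ∀ᶠ n : ℕ in atTop, ‖a ^ n‖ / (r : ℝ) ^ n ≤ 1 := by
    filter_upwards [(pow_nnnorm_pow_one_div_tendsto_nhds_spectralRadius a).eventually_lt_const h,
      eventually_ge_atTop 1] with n hn hn1
    rw [one_div, ENNReal.rpow_inv_lt_iff (by positivity), ENNReal.rpow_natCast] at hn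
    rw [div_le_one (by positivity)]
    exact_mod_cast hn.le
  obtain ⟨C, hC⟩ := (isBoundedUnder_of_eventually_le hev).bddAbove_range
  exact ⟨C, fun n => (div_le_iff₀ (by positivity)).mp (hC ⟨n, rfl⟩)⟩

open scoped Matrix.Norms.Operator in
theorem Matrix.norm_apply_le_linfty_opNorm {m n α : Type*} [Fintype m] [Fintype n]
    [SeminormedAddCommGroup α] (X : Matrix m n α) (i : m) (j : n) : ‖X i j‖ ≤ ‖X‖ := by
  rw [Matrix.linfty_opNorm_def]
  calc ‖X i j‖ ≤ ((∑ j', ‖X i j'‖₊ : ℝ≥0) : ℝ) := by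
        push_cast
        exact Finset.single_le_sum (fun _ _ => norm_nonneg _) (Finset.mem_univ j)
    _ ≤ _ := by
        exact_mod_cast Finset.le_sup (f := fun i => ∑ j', ‖X i j'‖₊) (Finset.mem_univ i)

open scoped Matrix.Norms.Operator in
theorem Matrix.exists_abs_pow_apply_le_of_forall_spectrum_norm_lt_one {ι : Type*} [Fintype ι]
    [DecidableEq ι] (M : Matrix ι ι ℝ)
    (hM : ∀ μ ∈ spectrum ℂ (M.map (algebraMap ℝ ℂ)), ‖μ‖ < 1) :
    ∃ C r : ℝ, 0 < r ∧ r < 1 ∧ ∀ n i j, |(M ^ n) i j| ≤ C * r ^ n := by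
  set M' := M.map (algebraMap ℝ ℂ)
  have hρ : spectralRadius ℂ M' < (1 : ℝ≥0) := by
    rcases subsingleton_or_nontrivial (Matrix ι ι ℂ) with _ | _
    · simp [spectralRadius, spectrum.of_subsingleton]
    · exact spectrum.spectralRadius_lt_of_forall_lt M' fun z hz => by exact_mod_cast hM z hz
  obtain ⟨r, hρr, hr1⟩ := ENNReal.lt_iff_exists_nnreal_btwn.mp hρ
  obtain ⟨C, hC⟩ := spectrum.exists_norm_pow_le_mul_pow_of_spectralRadius_lt hρr
  refine ⟨C, r, by exact_mod_cast pos_of_gt hρr, by exact_mod_cast hr1, fun n i j => ?_⟩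
  calc |(M ^ n) i j| = ‖(M' ^ n) i j‖ := by
        rw [← Matrix.map_pow M (algebraMap ℝ ℂ) n]; simp
    _ ≤ ‖M' ^ n‖ := Matrix.norm_apply_le_linfty_opNorm _ i j
    _ ≤ C * r ^ n := hC n

theorem exists_le_mul_exp_neg_of_le_mul_pow {f : ℕ → ℝ} {C r : ℝ} (hr0 : 0 < r) (hr1 : r < 1)
    (hf : ∀ n, f n ≤ C * r ^ n) :
    ∃ c > (0 : ℝ), ∃ γ > (0 : ℝ), ∀ n : ℕ, f n ≤ c * Real.exp (-γ * n) := by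
  refine ⟨max C 1, by positivity, -Real.log r, neg_pos.mpr (Real.log_neg hr0 hr1), fun n => ?_⟩
  rw [neg_neg, ← Real.rpow_def_of_pos hr0, Real.rpow_natCast]
  exact (hf n).trans (mul_le_mul_of_nonneg_right (le_max_left _ _) (by positivity))

section Measurability

variable {Ω α : Type*} {mΩ : MeasurableSpace Ω} [MeasurableSpace α] {l m n : Type*}

theorem Measurable.matrix_apply {X : Ω → Matrix m n α} (hX : Measurable X) (i : m) (j : n) :
    Measurable fun ω => X ω i j :=
  (measurable_pi_apply j).comp ((measurable_pi_apply i).comp hX)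

theorem Measurable.matrix_mul [Fintype m] [AddCommMonoid α] [Mul α] [MeasurableAdd₂ α]
    [MeasurableMul₂ α] {X : Ω → Matrix l m α} {Y : Ω → Matrix m n α} (hX : Measurable X)
    (hY : Measurable Y) : Measurable fun ω => X ω * Y ω :=
  measurable_pi_lambda _ fun i => measurable_pi_lambda _ fun j =>
    Finset.measurable_sum _ fun k _ => (hX.matrix_apply i k).mul (hY.matrix_apply k j)

theorem Measurable.kronecker [Mul α] [MeasurableMul₂ α] {l' m' : Type*} {X : Ω → Matrix l m α}
    {Y : Ω → Matrix l' m' α} (hX : Measurable X) (hY : Measurable Y) :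
    Measurable fun ω => X ω ⊗ₖ Y ω :=
  measurable_pi_lambda _ fun i => measurable_pi_lambda _ fun j =>
    (hX.matrix_apply i.1 j.1).mul (hY.matrix_apply i.2 j.2)

end Measurability

section EntrywiseIntegral

variable {Ω : Type*} [MeasurableSpace Ω] {l m n : Type*}

def EntrywiseIntegrable (P : Measure Ω) (X : Ω → Matrix m n ℝ) : Prop :=
  ∀ i j, Integrable (fun ω => X ω i j) P

noncomputable def entrywiseIntegral (P : Measure Ω) (X : Ω → Matrix m n ℝ) : Matrix m n ℝ :=
  Matrix.of fun i j => ∫ ω, X ω i j ∂P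

theorem entrywiseIntegrable_const (P : Measure Ω) [IsFiniteMeasure P] (X : Matrix m n ℝ) :
    EntrywiseIntegrable P fun _ => X :=
  fun _ _ => integrable_const _

theorem entrywiseIntegral_const (P : Measure Ω) [IsProbabilityMeasure P] (X : Matrix m n ℝ) :
    entrywiseIntegral P (fun _ => X) = X := by
  ext i j; simp [entrywiseIntegral]

theorem ProbabilityTheory.IdentDistrib.entrywiseIntegrable_iff {Ω' : Type*} [MeasurableSpace Ω']
    {P : Measure Ω} {P' : Measure Ω'} {X : Ω → Matrix m n ℝ} {Y : Ω' → Matrix m n ℝ}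
    (h : IdentDistrib X Y P P') :
    EntrywiseIntegrable P X ↔ EntrywiseIntegrable P' Y :=
  forall₂_congr fun i j => (h.comp (measurable_id.matrix_apply i j)).integrable_iff

theorem ProbabilityTheory.IdentDistrib.entrywiseIntegral_eq {Ω' : Type*} [MeasurableSpace Ω']
    {P : Measure Ω} {P' : Measure Ω'} {X : Ω → Matrix m n ℝ} {Y : Ω' → Matrix m n ℝ}
    (h : IdentDistrib X Y P P') :
    entrywiseIntegral P X = entrywiseIntegral P' Y := by
  ext i j; exact (h.comp (measurable_id.matrix_apply i j)).integral_eq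

variable [Fintype m] {P : Measure Ω} {X : Ω → Matrix l m ℝ} {Y : Ω → Matrix m n ℝ}

theorem ProbabilityTheory.IndepFun.entrywiseIntegrable_mul (hXY : IndepFun X Y P)
    (hX : EntrywiseIntegrable P X) (hY : EntrywiseIntegrable P Y) :
    EntrywiseIntegrable P fun ω => X ω * Y ω := fun i j => by
  simp only [Matrix.mul_apply]
  exact integrable_finsetSum _ fun k _ =>
    (hXY.comp (measurable_id.matrix_apply i k) (measurable_id.matrix_apply k j)).integrable_mul
      (hX i k) (hY k j)

theorem ProbabilityTheory.IndepFun.entrywiseIntegral_mul (hXY : IndepFun X Y P)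
    (hX : EntrywiseIntegrable P X) (hY : EntrywiseIntegrable P Y) :
    entrywiseIntegral P (fun ω => X ω * Y ω) = entrywiseIntegral P X * entrywiseIntegral P Y := by
  ext i j
  have hXY_ij : ∀ k, IndepFun (fun ω => X ω i k) (fun ω => Y ω k j) P := fun k =>
    hXY.comp (measurable_id.matrix_apply i k) (measurable_id.matrix_apply k j)
  simp only [entrywiseIntegral, Matrix.of_apply, Matrix.mul_apply]
  rw [integral_finsetSum (f := fun k ω => X ω i k * Y ω k j) _ fun k _ =>
    (hXY_ij k).integrable_mul (hX i k) (hY k j)]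
  exact Finset.sum_congr rfl fun k _ =>
    (hXY_ij k).integral_mul_eq_mul_integral (hX i k).aestronglyMeasurable
      (hY k j).aestronglyMeasurable

end EntrywiseIntegral

section MatProd

variable {Ω : Type*} {q : ℕ} (A : ℕ → Ω → Matrix (Fin q) (Fin q) ℝ)

@[simp]
theorem matProd_zero : matProd A 0 = 1 := by
  funext ω; simp [matProd]

theorem matProd_succ (n : ℕ) : matProd A (n + 1) = fun ω => matProd A n ω * A n ω := by
  funext ω; simp [matProd, List.range_succ]

theorem measurable_matProd_iSup_comap (n : ℕ) :
    Measurable[⨆ i ∈ Iio n, MeasurableSpace.comap (A i) inferInstance] (matProd A n) := by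
  induction n with
  | zero => rw [matProd_zero]; exact measurable_const
  | succ n ih =>
    rw [matProd_succ]
    refine Measurable.matrix_mul (ih.mono ?_ le_rfl) (comap_measurable (A n) |>.mono ?_ le_rfl)
    · exact biSup_mono fun i hi => hi.trans n.lt_succ_self
    · exact le_biSup (fun i => MeasurableSpace.comap (A i) inferInstance) n.lt_succ_self

theorem indepFun_matProd [MeasurableSpace Ω] {P : Measure Ω} (hmeas : ∀ i, Measurable (A i))
    (hindep : iIndepFun A P) (n : ℕ) : IndepFun (matProd A n) (A n) P := by
  have h := indep_iSup_of_disjoint (fun i => (hmeas i).comap_le) hindep.iIndep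
    (Set.disjoint_singleton_right.mpr (lt_irrefl n) : Disjoint (Iio n) {n})
  rw [iSup_singleton] at h
  exact (IndepFun_iff_Indep _ _ _).mpr
    (indep_of_indep_of_le_left h (measurable_matProd_iSup_comap A n).comap_le)

end MatProd

theorem frobNorm_sq_eq_sum_kronecker {q : ℕ} (X : Matrix (Fin q) (Fin q) ℝ) :
    frobNorm X ^ 2 = ∑ i, ∑ j, (X ⊗ₖ X) (i, i) (j, j) := by
  rw [frobNorm, Real.sq_sqrt (by positivity)]
  simp [Matrix.kroneckerMap_apply, sq]

theorem integral_frobNorm_sq {Ω : Type*} [MeasurableSpace Ω] {P : Measure Ω} {q : ℕ}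
    {X : Ω → Matrix (Fin q) (Fin q) ℝ} (hX : EntrywiseIntegrable P fun ω => X ω ⊗ₖ X ω) :
    ∫ ω, frobNorm (X ω) ^ 2 ∂P =
      ∑ i, ∑ j, entrywiseIntegral P (fun ω => X ω ⊗ₖ X ω) (i, i) (j, j) := by
  simp only [frobNorm_sq_eq_sum_kronecker]
  rw [integral_finsetSum _ fun i _ => integrable_finsetSum _ fun j _ => hX (i, i) (j, j)]
  exact Finset.sum_congr rfl fun i _ => integral_finsetSum _ fun j _ => hX (i, i) (j, j)

theorem entrywiseIntegral_kronecker_matProd {Ω : Type*} [MeasurableSpace Ω] {P : Measure Ω}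
    [IsProbabilityMeasure P] {q : ℕ} {A : ℕ → Ω → Matrix (Fin q) (Fin q) ℝ}
    (hmeas : ∀ i, Measurable (A i)) (hindep : iIndepFun A P)
    (hident : ∀ i, IdentDistrib (A i) (A 0) P P)
    (hint : EntrywiseIntegrable P fun ω => A 0 ω ⊗ₖ A 0 ω) (n : ℕ) :
    EntrywiseIntegrable P (fun ω => matProd A n ω ⊗ₖ matProd A n ω) ∧
      entrywiseIntegral P (fun ω => matProd A n ω ⊗ₖ matProd A n ω) =
        entrywiseIntegral P (fun ω => A 0 ω ⊗ₖ A 0 ω) ^ n := by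
  induction n with
  | zero =>
    simp only [matProd_zero, Pi.one_apply, Matrix.one_kronecker_one, pow_zero]
    exact ⟨entrywiseIntegrable_const P 1, entrywiseIntegral_const P 1⟩
  | succ n ih =>
    have hkron : Measurable fun B : Matrix (Fin q) (Fin q) ℝ => B ⊗ₖ B :=
      measurable_id.kronecker measurable_id
    have hident_n : IdentDistrib (fun ω => A n ω ⊗ₖ A n ω) (fun ω => A 0 ω ⊗ₖ A 0 ω) P P :=
      (hident n).comp hkron
    have hindep_n : IndepFun (fun ω => matProd A n ω ⊗ₖ matProd A n ω)
        (fun ω => A n ω ⊗ₖ A n ω) P :=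
      (indepFun_matProd A hmeas hindep n).comp hkron hkron
    have hint_n := hident_n.entrywiseIntegrable_iff.mpr hint
    simp only [matProd_succ, Matrix.mul_kronecker_mul]
    refine ⟨hindep_n.entrywiseIntegrable_mul ih.1 hint_n, ?_⟩
    rw [hindep_n.entrywiseIntegral_mul ih.1 hint_n, ih.2, pow_succ]
    exact congrArg _ hident_n.entrywiseIntegral_eq

/-- If `A_1, A_2, …` are i.i.d. random `q×q` matrices such that all eigenvalues of
`E(A_1 ⊗ A_1)` (Kronecker product) have modulus less than one, then
`E‖A_1⋯A_n‖² ≤ c e^{−γn}` for some constants `c, γ > 0`. -/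
theorem second_moment_products_geometric_decay
    {Ω : Type*} [MeasurableSpace Ω] (P : Measure Ω) [IsProbabilityMeasure P]
    {q : ℕ} (A : ℕ → Ω → Matrix (Fin q) (Fin q) ℝ)
    (hmeas : ∀ i, Measurable (A i))
    (hindep : iIndepFun A P)
    (hident : ∀ i, IdentDistrib (A i) (A 0) P P)
    (hint : ∀ i j, Integrable (fun ω => (A 0 ω ⊗ₖ A 0 ω) i j) P)
    (hspec : ∀ μ ∈ spectrum ℂ
        ((Matrix.of (fun i j => ∫ ω, (A 0 ω ⊗ₖ A 0 ω) i j ∂P)).map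
          (algebraMap ℝ ℂ)),
      ‖μ‖ < 1) :
    ∃ c > (0 : ℝ), ∃ γ > (0 : ℝ), ∀ n : ℕ,
      ∫ ω, frobNorm (matProd A n ω) ^ 2 ∂P ≤ c * Real.exp (-γ * n) := by
  obtain ⟨C, r, hr0, hr1, hC⟩ :=
    Matrix.exists_abs_pow_apply_le_of_forall_spectrum_norm_lt_one _ hspec
  refine exists_le_mul_exp_neg_of_le_mul_pow hr0 hr1 (C := q ^ 2 * C) fun n => ?_
  obtain ⟨hint_n, hmean_n⟩ := entrywiseIntegral_kronecker_matProd hmeas hindep hident hint n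
  rw [integral_frobNorm_sq hint_n, hmean_n]
  calc ∑ i, ∑ j, (entrywiseIntegral P (fun ω => A 0 ω ⊗ₖ A 0 ω) ^ n) (i, i) (j, j)
      ≤ ∑ _i : Fin q, ∑ _j : Fin q, C * r ^ n :=
        Finset.sum_le_sum fun i _ => Finset.sum_le_sum fun j _ =>
          (le_abs_self _).trans (hC n _ _)
    _ = q ^ 2 * C * r ^ n := by simp; ring
end
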